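/- arXiv:1202.1219 — 2 statements merged into one kernel-verified Lean document; each statement's English description precedes it below -/
import Mathlib

section
/- For all nonnegative integers i and j, the sum over m from 0 to min(i,j) of q^{T_{i+j-m} + T_m} / ((q;q)_{i-m} (q;q)_{j-m} (q;q)_m) equals q^{T_i + T_j} / ((q;q)_i (q;q)_j), as an identity of formal power series in q (with |q| < 1, or in the ring of formal power series where (q;q)_n is invertible). -/
/-!
Both sides `F i j` satisfy `(1 - q^(j+1)) F (i+1) (j+1) = q^(i+j+2) (F i j + F (i+1) j)` and agree
when `i = 0` or `j = 0`. For the right side this is a rational-function identity. For the left side,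
split `1 - q^(j+1) = (1 - q^m) + q^m (1 - q^(j+1-m))` in the `m`-th summand: the first part
cancels a factor of `(q;q)_m` and yields the `(m-1)`-th summand for `(i, j)`, the second cancels a
factor of `(q;q)_(j+1-m)` and yields the `m`-th summand for `(i+1, j)`.
-/

open Finset

/-- The variable `q`, as a rational function over `ℚ`. -/
noncomputable def q : RatFunc ℚ := RatFunc.X

/-- The q-shifted factorial `(a; q)_k`. -/
noncomputable def qPoch (a : RatFunc ℚ) (k : ℕ) : RatFunc ℚ :=
  ∏ s ∈ Finset.range k, (1 - a * q ^ s)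

/-- The n-th triangular number `T_n = n(n+1)/2`. -/
def T (n : ℕ) : ℕ := n * (n + 1) / 2

lemma one_sub_q_pow_ne_zero {n : ℕ} (hn : n ≠ 0) : (1 : RatFunc ℚ) - q ^ n ≠ 0 := by
  have hpoly : (1 - Polynomial.X ^ n : Polynomial ℚ) ≠ 0 := fun h => by
    simpa [zero_pow hn] using congrArg (Polynomial.eval 0) h
  simpa [q, RatFunc.algebraMap_X] using RatFunc.algebraMap_ne_zero hpoly

lemma qPoch_q_succ (n : ℕ) : qPoch q (n + 1) = qPoch q n * (1 - q ^ (n + 1)) := by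
  rw [qPoch, prod_range_succ, pow_succ' q n]
  rfl

lemma qPoch_q_ne_zero (n : ℕ) : qPoch q n ≠ 0 := by
  induction n with
  | zero => simp [qPoch]
  | succ n ih => rw [qPoch_q_succ]; exact mul_ne_zero ih (one_sub_q_pow_ne_zero n.succ_ne_zero)

lemma T_succ (n : ℕ) : T (n + 1) = T n + (n + 1) := by
  unfold T
  rw [show (n + 1) * (n + 1 + 1) = n * (n + 1) + (n + 1) * 2 by ring,
    Nat.add_mul_div_right _ _ two_pos]

noncomputable def summand (i j m : ℕ) : RatFunc ℚ :=
  q ^ (T (i + j - m) + T m) / (qPoch q (i - m) * qPoch q (j - m) * qPoch q m)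

lemma one_sub_q_pow_mul_summand_succ {i j l : ℕ} (hl : l ≤ i + j) :
    (1 - q ^ (l + 1)) * summand (i + 1) (j + 1) (l + 1) = q ^ (i + j + 2) * summand i j l := by
  have hexp : T (i + j - l + 1) + T (l + 1) = (i + j + 2) + (T (i + j - l) + T l) := by
    rw [T_succ, T_succ]; omega
  have := one_sub_q_pow_ne_zero l.succ_ne_zero
  have := qPoch_q_ne_zero (i - l)
  have := qPoch_q_ne_zero (j - l)
  have := qPoch_q_ne_zero l
  rw [summand, summand, show i + 1 + (j + 1) - (l + 1) = i + j - l + 1 by omega,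
    Nat.add_sub_add_right, Nat.add_sub_add_right, hexp, qPoch_q_succ, pow_add q (i + j + 2)]
  field_simp

lemma q_pow_mul_one_sub_q_pow_mul_summand {i j m : ℕ} (hm : m ≤ j) :
    q ^ m * (1 - q ^ (j + 1 - m)) * summand (i + 1) (j + 1) m =
      q ^ (i + j + 2) * summand (i + 1) j m := by
  have hexp : q ^ m * q ^ (T (i + 1 + j - m + 1) + T m) =
      q ^ (i + j + 2) * q ^ (T (i + 1 + j - m) + T m) := by
    rw [← pow_add, ← pow_add, T_succ]; congr 1; omega
  have : (1 : RatFunc ℚ) - q ^ (j - m + 1) ≠ 0 := one_sub_q_pow_ne_zero (j - m).succ_ne_zero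
  have := qPoch_q_ne_zero (i + 1 - m)
  have := qPoch_q_ne_zero (j - m)
  have := qPoch_q_ne_zero m
  rw [summand, summand, show i + 1 + (j + 1) - m = i + 1 + j - m + 1 by omega,
    show j + 1 - m = j - m + 1 by omega, qPoch_q_succ]
  field_simp
  linear_combination hexp

lemma one_sub_q_pow_mul_sum_summand_succ_succ (i j : ℕ) :
    (1 - q ^ (j + 1)) * ∑ m ∈ range (min (i + 1) (j + 1) + 1), summand (i + 1) (j + 1) m =
      q ^ (i + j + 2) * ((∑ m ∈ range (min i j + 1), summand i j m) +
        ∑ m ∈ range (min (i + 1) j + 1), summand (i + 1) j m) := by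
  have hsplit : ∀ m ∈ range (min i j + 2), (1 - q ^ (j + 1)) * summand (i + 1) (j + 1) m =
      (1 - q ^ m) * summand (i + 1) (j + 1) m +
        q ^ m * (1 - q ^ (j + 1 - m)) * summand (i + 1) (j + 1) m := by
    intro m hm
    rw [← add_mul, mul_sub, ← pow_add, Nat.add_sub_cancel' (by rw [mem_range] at hm; omega)]
    ring
  have hfirst : ∑ m ∈ range (min i j + 2), (1 - q ^ m) * summand (i + 1) (j + 1) m =
      q ^ (i + j + 2) * ∑ m ∈ range (min i j + 1), summand i j m := by
    rw [sum_range_succ', pow_zero, sub_self, zero_mul, add_zero, mul_sum]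
    refine sum_congr rfl fun l hl => one_sub_q_pow_mul_summand_succ ?_
    rw [mem_range] at hl; omega
  have hsecond : ∑ m ∈ range (min i j + 2),
      q ^ m * (1 - q ^ (j + 1 - m)) * summand (i + 1) (j + 1) m =
        q ^ (i + j + 2) * ∑ m ∈ range (min (i + 1) j + 1), summand (i + 1) j m := by
    -- the only extra index, `m = j + 1`, carries the factor `1 - q ^ 0 = 0`
    have hsub : range (min (i + 1) j + 1) ⊆ range (min i j + 2) := range_subset_range.2 (by omega)
    rw [← sum_subset hsub fun m hm hm' => ?_, mul_sum]
    · refine sum_congr rfl fun m hm => q_pow_mul_one_sub_q_pow_mul_summand ?_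
      rw [mem_range] at hm; omega
    · simp only [mem_range] at hm hm'
      rw [show j + 1 - m = 0 by omega, pow_zero, sub_self, mul_zero, zero_mul]
  rw [show min (i + 1) (j + 1) + 1 = min i j + 2 by omega, mul_sum, sum_congr rfl hsplit,
    sum_add_distrib, hfirst, hsecond, mul_add]

lemma one_sub_q_pow_mul_rhs_succ_succ (i j : ℕ) :
    (1 - q ^ (j + 1)) * (q ^ (T (i + 1) + T (j + 1)) / (qPoch q (i + 1) * qPoch q (j + 1))) =
      q ^ (i + j + 2) * (q ^ (T i + T j) / (qPoch q i * qPoch q j) +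
        q ^ (T (i + 1) + T j) / (qPoch q (i + 1) * qPoch q j)) := by
  have := one_sub_q_pow_ne_zero i.succ_ne_zero
  have := one_sub_q_pow_ne_zero j.succ_ne_zero
  have := qPoch_q_ne_zero i
  have := qPoch_q_ne_zero j
  rw [T_succ i, T_succ j, qPoch_q_succ i, qPoch_q_succ j]
  field_simp
  ring

lemma sum_summand_eq (i j : ℕ) :
    ∑ m ∈ range (min i j + 1), summand i j m = q ^ (T i + T j) / (qPoch q i * qPoch q j) := by
  induction j generalizing i with
  | zero => simp [summand, qPoch]
  | succ j ih =>
    cases i with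
    | zero => simp [summand, qPoch, add_comm]
    | succ i =>
      refine mul_left_cancel₀ (one_sub_q_pow_ne_zero j.succ_ne_zero) ?_
      rw [one_sub_q_pow_mul_sum_summand_succ_succ, ih, ih, one_sub_q_pow_mul_rhs_succ_succ]

/-- Lemma 2 of Alladi–Gordon:
`∑_{m=0}^{min(i,j)} q^{T_{i+j-m}+T_m} / ((q;q)_{i-m}(q;q)_{j-m}(q;q)_m)
  = q^{T_i+T_j} / ((q;q)_i (q;q)_j)`. -/
theorem alladi_gordon_lemma2 (i j : ℕ) :
    ∑ m ∈ Finset.range (min i j + 1),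
      q ^ (T (i + j - m) + T m) / (qPoch q (i - m) * qPoch q (j - m) * qPoch q m) =
    q ^ (T i + T j) / (qPoch q i * qPoch q j) :=
  sum_summand_eq i j
end

section
/- Fix nonnegative integers i, j with j ≤ i. Let O(i,j) be the disjoint union over 0 ≤ k ≤ j of the sets O(i,j,k) of overpartitions with exactly k nonnegative parts, each part at most j−1, and such that for each 1 ≤ s ≤ k−1, if j−s occurs as a part there are at least k−s overlined parts to its right (with the empty overpartition the sole element of O(i,j,0)). Then ∑_{λ ∈ O(i,j)} (-1)^{ol(λ)} q^{|λ| + ol(λ)(i−ℓ(λ)+1)} q^{(i−ℓ(λ))(j−ℓ(λ))} = 1, where ℓ(λ) is the number of parts and ol(λ) the number of overlined parts of λ. -/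
/-!
Subtracting from each part of `λ ∈ O(i,j,k)` the number of overlined parts to its right is a
bijection onto pairs `(μ, S)` of a partition `μ` with at most `k` parts of size at most `j - k`
and an arbitrary set `S` of overlined positions: overlining only first occurrences keeps `μ`
weakly decreasing, and the condition on the parts `j - s` is exactly the bound `μ ≤ j - k`. The
overlining weight of `S` is then independent of `μ`, and summing it over all `S` gives
`(q^{i-k+1}; q)_k`, so the `k`-th inner sum is `[j, k]_q (q^{i-k+1}; q)_k q^{(i-k)(j-k)}`.
By the `q`-Pascal rule these sums `F(i,j)` satisfy `F(i, j+1) = q^i F(i,j) + (1 - q^i) F(i-1, j)`,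
and `F(i, 0) = 1`.
-/

open Finset
open scoped Classical

/-- The Gaussian (q-binomial) coefficient. -/
noncomputable def qbinom (j k : ℕ) : RatFunc ℚ :=
  qPoch q j / (qPoch q k * qPoch q (j - k))

/-- The set `O(i,j,k)` of overpartitions with exactly `k` nonnegative parts, each part at
most `j-1` (encoded as a weakly decreasing function `Fin k → Fin j` together with an
overlining indicator `Fin k → Bool`, where only first occurrences may be overlined),
such that for each `1 ≤ s ≤ k-1`, if `j-s` occurs as a part then there are at least
`k-s` overlined parts strictly to its right. (It does not depend on `i`.) -/
noncomputable def AGset (j k : ℕ) : Finset ((Fin k → Fin j) × (Fin k → Bool)) :=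
  Finset.univ.filter (fun p =>
    (∀ a b : Fin k, a ≤ b → (p.1 b : ℕ) ≤ (p.1 a : ℕ)) ∧
    (∀ a : Fin k, p.2 a = true → ∀ b : Fin k, b < a → p.1 b ≠ p.1 a) ∧
    (∀ s ∈ Finset.Icc 1 (k - 1), ∀ a : Fin k, (p.1 a : ℕ) = j - s →
      k - s ≤ (Finset.univ.filter (fun b : Fin k => a < b ∧ p.2 b = true)).card))

/-- The number of overlined parts of an overpartition. -/
def ol {j k : ℕ} (p : (Fin k → Fin j) × (Fin k → Bool)) : ℕ :=
  (Finset.univ.filter (fun a : Fin k => p.2 a = true)).card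

/-- The size (sum of parts) of an overpartition. -/
def psize {j k : ℕ} (p : (Fin k → Fin j) × (Fin k → Bool)) : ℕ :=
  ∑ a, (p.1 a : ℕ)

/-- Partitions into at most `k` parts of size at most `m`, padded with zeros; `boxGen m k` is the
Gaussian binomial coefficient `[m + k, k]_q`. -/
def boxPartitions (m k : ℕ) : Finset (Fin k → Fin (m + 1)) :=
  univ.filter Antitone

noncomputable def boxGen (m k : ℕ) : RatFunc ℚ :=
  ∑ μ ∈ boxPartitions m k, q ^ ∑ a, (μ a : ℕ)

@[simp]
lemma mem_boxPartitions {m k : ℕ} {μ : Fin k → Fin (m + 1)} :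
    μ ∈ boxPartitions m k ↔ Antitone μ := by
  simp [boxPartitions]

lemma boxGen_zero_left (k : ℕ) : boxGen 0 k = 1 := by
  simp [boxGen, boxPartitions, Subsingleton.antitone', Fin.val_eq_zero]

lemma boxGen_zero_right (m : ℕ) : boxGen m 0 = 1 := by
  simp [boxGen, boxPartitions, Subsingleton.antitone]

lemma antitone_snoc_zero {m k : ℕ} {ν : Fin k → Fin (m + 1)} (hν : Antitone ν) :
    Antitone (Fin.snoc ν 0 : Fin (k + 1) → Fin (m + 1)) := by
  intro a b hab
  induction b using Fin.lastCases with
  | last => simp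
  | cast b =>
    induction a using Fin.lastCases with
    | last => exact absurd hab (Fin.castSucc_lt_last b).not_ge
    | cast a => simpa using hν (Fin.castSucc_le_castSucc_iff.mp hab)

lemma sum_boxPartitions_last_eq_zero (m k : ℕ) :
    ∑ μ ∈ (boxPartitions (m + 1) (k + 1)).filter (fun μ => μ (Fin.last k) = 0),
      q ^ ∑ a, (μ a : ℕ) = boxGen (m + 1) k := by
  symm
  refine sum_bij (fun ν _ => Fin.snoc ν 0) (fun ν hν => ?_)
    (fun ν _ ν' _ h => Fin.snoc_left_injective _ h)
    (fun μ hμ => ?_) (fun ν _ => by simp [Fin.sum_univ_castSucc])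
  · simp only [mem_filter, mem_boxPartitions] at hν ⊢
    exact ⟨antitone_snoc_zero hν, by simp⟩
  · simp only [mem_filter, mem_boxPartitions] at hμ
    refine ⟨Fin.init μ, ?_, ?_⟩
    · exact mem_boxPartitions.mpr (hμ.1.comp_monotone Fin.strictMono_castSucc.monotone)
    · rw [← hμ.2, Fin.snoc_init_self]

lemma sum_boxPartitions_last_ne_zero (m k : ℕ) :
    ∑ μ ∈ (boxPartitions (m + 1) (k + 1)).filter (fun μ => μ (Fin.last k) ≠ 0),
      q ^ ∑ a, (μ a : ℕ) = q ^ (k + 1) * boxGen m (k + 1) := by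
  rw [boxGen, mul_sum]
  symm
  refine sum_bij (fun ν _ => Fin.succ ∘ ν) (fun ν hν => ?_)
    (fun ν _ ν' _ h => funext fun a => Fin.succ_injective _ (congrFun h a))
    (fun μ hμ => ?_) (fun ν _ => ?_)
  · simp only [mem_filter, mem_boxPartitions] at hν ⊢
    exact ⟨Fin.strictMono_succ.monotone.comp_antitone hν, Fin.succ_ne_zero _⟩
  · simp only [mem_filter, mem_boxPartitions] at hμ
    have hpos : ∀ a, μ a ≠ 0 := fun a h =>
      hμ.2 (le_antisymm (h ▸ hμ.1 (Fin.le_last a)) (Fin.zero_le _))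
    choose ν hν using fun a => Fin.exists_succ_eq.mpr (hpos a)
    refine ⟨ν, ?_, funext hν⟩
    rw [mem_boxPartitions]
    intro a b hab
    simpa [← hν] using hμ.1 hab
  · simp [Fin.val_succ, sum_add_distrib, ← pow_add, add_comm]

lemma boxGen_succ_succ (m k : ℕ) :
    boxGen (m + 1) (k + 1) = q ^ (k + 1) * boxGen m (k + 1) + boxGen (m + 1) k := by
  rw [boxGen, ← sum_filter_add_sum_filter_not _ (fun μ => μ (Fin.last k) ≠ 0),
    sum_boxPartitions_last_ne_zero]
  simp only [not_not, sum_boxPartitions_last_eq_zero]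

section Overlining

variable {k : ℕ}

def overlined (T : Fin k → Bool) : Finset (Fin k) :=
  univ.filter (fun a => T a = true)

def overlinedAfter (T : Fin k → Bool) (a : Fin k) : ℕ :=
  (univ.filter (fun b : Fin k => a < b ∧ T b = true)).card

lemma ol_eq_card_overlined {j : ℕ} (p : (Fin k → Fin j) × (Fin k → Bool)) :
    ol p = #(overlined p.2) :=
  rfl

lemma qPoch_pow_eq_sum (c : ℕ) :
    qPoch (q ^ c) k = ∑ T : Fin k → Bool,
      (-1 : RatFunc ℚ) ^ #(overlined T) *
        q ^ (#(overlined T) * c + ∑ a ∈ overlined T, (a : ℕ)) := by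
  have hfactor (a : Fin k) : 1 - q ^ c * q ^ (a : ℕ) =
      ∑ b : Bool, if b = true then -q ^ (c + (a : ℕ)) else 1 := by
    simp [pow_add, sub_eq_neg_add]
  rw [qPoch, ← Fin.prod_univ_eq_prod_range (fun s => 1 - q ^ c * q ^ s)]
  simp only [hfactor, Fintype.prod_sum]
  refine sum_congr rfl fun T _ => ?_
  rw [← prod_filter, ← overlined, prod_neg, prod_pow_eq_pow_sum, sum_add_distrib, sum_const,
    smul_eq_mul]

lemma sum_overlinedAfter (T : Fin k → Bool) :
    ∑ a, overlinedAfter T a = ∑ b ∈ overlined T, (b : ℕ) := by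
  simp only [overlinedAfter, card_eq_sum_ones, sum_filter]
  rw [sum_comm, overlined, sum_filter]
  refine sum_congr rfl fun b _ => ?_
  by_cases hb : T b = true
  · simp [hb, filter_gt_eq_Iio]
  · simp [hb]

lemma overlinedAfter_antitone (T : Fin k → Bool) : Antitone (overlinedAfter T) :=
  fun _ _ hab => card_le_card fun _ hc => by
    simp only [mem_filter, mem_univ, true_and] at hc ⊢
    exact ⟨hab.trans_lt hc.1, hc.2⟩

lemma overlinedAfter_add_lt (T : Fin k → Bool) (a : Fin k) : overlinedAfter T a + a < k := by
  have : overlinedAfter T a ≤ #(Ioi a) := card_le_card fun c hc => by simp_all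
  rw [Fin.card_Ioi] at this
  omega

lemma overlinedAfter_lt_of_lt (T : Fin k → Bool) {a b : Fin k} (hba : b < a) (ha : T a = true) :
    overlinedAfter T a < overlinedAfter T b := by
  refine card_lt_card ⟨fun c hc => ?_, fun h => ?_⟩
  · simp only [mem_filter, mem_univ, true_and] at hc ⊢
    exact ⟨hba.trans hc.1, hc.2⟩
  · simpa using h (by simp [hba, ha] : a ∈ _)

end Overlining

section Overpartition

variable {k : ℕ} {l : Fin k → ℕ} {T : Fin k → Bool}

/-- Overlined parts are first occurrences, so those in positions `(a, b]` have distinct values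
in `[l b, l a)`. -/
lemma card_overlined_Ioc_le (hl : Antitone l) (hT : ∀ a, T a = true → ∀ b < a, l b ≠ l a)
    (a b : Fin k) :
    #(univ.filter fun c => a < c ∧ c ≤ b ∧ T c = true) ≤ l a - l b := by
  rw [← Nat.card_Ico]
  refine card_le_card_of_injOn l (fun c hc => ?_) (fun c hc c' hc' hcc' => ?_)
  · simp only [coe_filter, mem_univ, true_and, Set.mem_ofPred_eq] at hc
    simp only [coe_Ico, Set.mem_Ico]
    exact ⟨hl hc.2.1, (hl hc.1.le).lt_of_ne (hT c hc.2.2 a hc.1).symm⟩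
  · simp only [coe_filter, mem_univ, true_and, Set.mem_ofPred_eq] at hc hc'
    by_contra hne
    rcases lt_or_gt_of_ne hne with h | h
    · exact hT c' hc'.2.2 c h hcc'
    · exact hT c hc.2.2 c' h hcc'.symm

lemma overlinedAfter_le_add (hl : Antitone l) (hT : ∀ a, T a = true → ∀ b < a, l b ≠ l a)
    (a b : Fin k) :
    overlinedAfter T a ≤ overlinedAfter T b + (l a - l b) := by
  have hsplit : univ.filter (fun c => a < c ∧ T c = true) ⊆
      univ.filter (fun c => b < c ∧ T c = true) ∪
        univ.filter (fun c => a < c ∧ c ≤ b ∧ T c = true) := by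
    intro c
    simp only [mem_filter, mem_univ, true_and, mem_union]
    rintro ⟨hac, hc⟩
    rcases lt_or_ge b c with hbc | hcb
    exacts [Or.inl ⟨hbc, hc⟩, Or.inr ⟨hac, hcb, hc⟩]
  exact (card_le_card hsplit).trans <| (card_union_le _ _).trans <|
    Nat.add_le_add_left (card_overlined_Ioc_le hl hT a b) _

lemma overlinedAfter_le (hl : Antitone l) (hT : ∀ a, T a = true → ∀ b < a, l b ≠ l a)
    (a : Fin k) : overlinedAfter T a ≤ l a := by
  obtain ⟨n, rfl⟩ := Nat.exists_eq_add_one.mpr a.pos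
  have hlast : overlinedAfter T (Fin.last n) = 0 := by
    simp [overlinedAfter, (Fin.le_last _).not_gt]
  have := overlinedAfter_le_add hl hT a (Fin.last n)
  omega

end Overpartition

section AGset

variable {j k : ℕ} {p : (Fin k → Fin j) × (Fin k → Bool)}

lemma mem_AGset_iff (hk : k ≤ j) :
    p ∈ AGset j k ↔ Antitone (fun a => (p.1 a : ℕ)) ∧
      (∀ a, p.2 a = true → ∀ b < a, (p.1 b : ℕ) ≠ p.1 a) ∧
      ∀ a, (p.1 a : ℕ) ≤ j - k + overlinedAfter p.2 a := by
  simp only [AGset, mem_filter, mem_univ, true_and, Fin.val_ne_iff]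
  refine and_congr Iff.rfl (and_congr Iff.rfl ⟨fun h a => ?_, fun h s hs a ha => ?_⟩)
  · by_contra! hlt
    have hs : j - p.1 a ∈ Icc 1 (k - 1) := by
      rw [mem_Icc]
      omega
    have := h _ hs a (by omega)
    unfold overlinedAfter at hlt
    omega
  · rw [mem_Icc] at hs
    have := h a
    unfold overlinedAfter at this
    omega

/-- The clamp only makes the map total: it is inactive on `AGset j k` (`val_toBox`). -/
def toBox (p : (Fin k → Fin j) × (Fin k → Bool)) :
    (Fin k → Fin (j - k + 1)) × (Fin k → Bool) :=
  (fun a => Fin.clamp (p.1 a - overlinedAfter p.2 a) (j - k), p.2)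

lemma val_toBox (hk : k ≤ j) (hp : p ∈ AGset j k) (a : Fin k) :
    ((toBox p).1 a : ℕ) = p.1 a - overlinedAfter p.2 a := by
  have := ((mem_AGset_iff hk).mp hp).2.2 a
  simp only [toBox, Fin.clamp, min_eq_left_iff]
  omega

lemma toBox_mem (hk : k ≤ j) (hp : p ∈ AGset j k) :
    toBox p ∈ boxPartitions (j - k) k ×ˢ (univ : Finset (Fin k → Bool)) := by
  obtain ⟨hl, hT, -⟩ := (mem_AGset_iff hk).mp hp
  refine mem_product.mpr ⟨mem_boxPartitions.mpr fun a b hab => ?_, mem_univ _⟩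
  have h₁ := overlinedAfter_le_add hl hT a b
  have h₂ := overlinedAfter_le hl hT b
  have h₃ := hl hab
  dsimp only at h₁ h₂ h₃
  rw [Fin.le_iff_val_le_val, val_toBox hk hp, val_toBox hk hp]
  omega

lemma toBox_injOn (hk : k ≤ j) : Set.InjOn (@toBox j k) (AGset j k) := by
  intro p hp p' hp' h
  have hT : p.2 = p'.2 := (Prod.ext_iff.mp h).2
  refine Prod.ext (funext fun a => Fin.ext ?_) hT
  have hμ := congrArg (fun x => (x.1 a : ℕ)) h
  obtain ⟨hl, hT₁, -⟩ := (mem_AGset_iff hk).mp hp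
  obtain ⟨hl', hT₁', -⟩ := (mem_AGset_iff hk).mp hp'
  have h₁ := overlinedAfter_le hl hT₁ a
  have h₂ := overlinedAfter_le hl' hT₁' a
  simp only [val_toBox hk hp, val_toBox hk hp', hT] at hμ h₁
  omega

lemma toBox_surjOn (hk : k ≤ j) :
    Set.SurjOn (@toBox j k) (AGset j k)
      ↑(boxPartitions (j - k) k ×ˢ (univ : Finset (Fin k → Bool))) := by
  rintro ⟨μ, T⟩ hx
  have hμ : Antitone μ := mem_boxPartitions.mp (mem_product.mp (mem_coe.mp hx)).1
  have hlt (a : Fin k) : (μ a : ℕ) + overlinedAfter T a < j := by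
    have := overlinedAfter_add_lt T a
    have := (μ a).isLt
    omega
  refine ⟨(fun a => ⟨μ a + overlinedAfter T a, hlt a⟩, T), ?_, ?_⟩
  · refine (mem_AGset_iff hk).mpr
      ⟨Antitone.add (fun _ _ hab => hμ hab) (overlinedAfter_antitone T), fun a ha b hba => ?_,
        fun a => ?_⟩
    · have := overlinedAfter_lt_of_lt T hba ha
      have : (μ a : ℕ) ≤ μ b := hμ hba.le
      dsimp only
      omega
    · have := (μ a).isLt
      dsimp only
      omega
  · refine Prod.ext (funext fun a => Fin.ext ?_) rfl
    have := (μ a).isLt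
    simp only [toBox, Fin.clamp]
    omega

lemma psize_eq_toBox_add (hk : k ≤ j) (hp : p ∈ AGset j k) :
    psize p = ∑ a, ((toBox p).1 a : ℕ) + ∑ b ∈ overlined p.2, (b : ℕ) := by
  obtain ⟨hl, hT, -⟩ := (mem_AGset_iff hk).mp hp
  rw [← sum_overlinedAfter, ← sum_add_distrib, psize]
  refine sum_congr rfl fun a _ => ?_
  have := overlinedAfter_le hl hT a
  rw [val_toBox hk hp]
  omega

theorem sum_AGset_eq_boxGen_mul_qPoch (hk : k ≤ j) (c : ℕ) :
    ∑ p ∈ AGset j k, (-1 : RatFunc ℚ) ^ ol p * q ^ (psize p + ol p * c) =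
      boxGen (j - k) k * qPoch (q ^ c) k := by
  rw [boxGen, qPoch_pow_eq_sum, sum_mul_sum, ← sum_product']
  refine sum_nbij toBox (fun p => toBox_mem hk) (toBox_injOn hk) (toBox_surjOn hk) fun p hp => ?_
  rw [psize_eq_toBox_add hk hp, ol_eq_card_overlined]
  simp only [toBox]
  ring

end AGset

noncomputable def agTerm (i j k : ℕ) : RatFunc ℚ :=
  boxGen (j - k) k * qPoch (q ^ (i - k + 1)) k * q ^ ((i - k) * (j - k))

lemma qPoch_succ (a : RatFunc ℚ) (k : ℕ) : qPoch a (k + 1) = qPoch a k * (1 - a * q ^ k) :=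
  prod_range_succ _ _

lemma agTerm_zero (i j : ℕ) : agTerm i (j + 1) 0 = q ^ i * agTerm i j 0 := by
  simp only [agTerm, boxGen_zero_right, Nat.sub_zero, mul_add, mul_one, pow_add]
  ring

lemma agTerm_succ_succ {i j k : ℕ} (hkj : k < j) (hki : k < i) :
    agTerm i (j + 1) (k + 1) = q ^ i * agTerm i j (k + 1) + (1 - q ^ i) * agTerm (i - 1) j k := by
  obtain ⟨m, rfl⟩ := Nat.exists_eq_add_of_lt hkj
  obtain ⟨n, rfl⟩ := Nat.exists_eq_add_of_lt hki
  simp only [agTerm, qPoch_succ, show k + m + 1 + 1 - (k + 1) = m + 1 by omega,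
    show k + m + 1 - (k + 1) = m by omega, show k + m + 1 - k = m + 1 by omega,
    show k + n + 1 - (k + 1) = n by omega, show k + n + 1 - 1 - k = n by omega, boxGen_succ_succ]
  ring

lemma agTerm_succ_self {i j : ℕ} (hji : j < i) :
    agTerm i (j + 1) (j + 1) = (1 - q ^ i) * agTerm (i - 1) j j := by
  obtain ⟨n, rfl⟩ := Nat.exists_eq_add_of_lt hji
  simp only [agTerm, qPoch_succ, Nat.sub_self, boxGen_zero_left,
    show j + n + 1 - (j + 1) = n by omega, show j + n + 1 - 1 - j = n by omega, ← pow_add]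
  rw [show n + 1 + j = j + n + 1 by omega]
  ring

lemma sum_agTerm_succ {i j : ℕ} (hji : j < i) :
    ∑ k ∈ range (j + 2), agTerm i (j + 1) k =
      q ^ i * ∑ k ∈ range (j + 1), agTerm i j k +
        (1 - q ^ i) * ∑ k ∈ range (j + 1), agTerm (i - 1) j k := by
  have hmid : ∑ k ∈ range j, agTerm i (j + 1) (k + 1) =
      q ^ i * ∑ k ∈ range j, agTerm i j (k + 1) +
        (1 - q ^ i) * ∑ k ∈ range j, agTerm (i - 1) j k := by
    rw [mul_sum, mul_sum, ← sum_add_distrib]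
    exact sum_congr rfl fun k hk => agTerm_succ_succ (mem_range.mp hk) ((mem_range.mp hk).trans hji)
  rw [sum_range_succ', sum_range_succ, hmid, agTerm_zero, agTerm_succ_self hji,
    sum_range_succ' (agTerm i j), sum_range_succ (agTerm (i - 1) j)]
  ring

lemma sum_agTerm_eq_one {i j : ℕ} (hji : j ≤ i) :
    ∑ k ∈ range (j + 1), agTerm i j k = 1 := by
  induction j generalizing i with
  | zero => simp [agTerm, boxGen_zero_right, qPoch]
  | succ j ih =>
    rw [sum_agTerm_succ (by omega), ih (by omega), ih (by omega)]
    ring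

/-- Theorem 3.1: for `j ≤ i`, summing over `O(i,j) = ⨄_{k=0}^{j} O(i,j,k)`,
`∑_{λ ∈ O(i,j)} (-1)^{ol(λ)} q^{|λ| + ol(λ)(i-ℓ(λ)+1)} q^{(i-ℓ(λ))(j-ℓ(λ))} = 1`. -/
theorem AG_involution_identity (i j : ℕ) (hji : j ≤ i) :
    ∑ k ∈ Finset.range (j + 1), ∑ p ∈ AGset j k,
      (-1 : RatFunc ℚ) ^ ol p * q ^ (psize p + ol p * (i - k + 1) + (i - k) * (j - k)) = 1 := by
  refine (sum_congr rfl fun k hk => ?_).trans (sum_agTerm_eq_one hji)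
  rw [agTerm, ← sum_AGset_eq_boxGen_mul_qPoch (Nat.lt_succ_iff.mp (mem_range.mp hk)), sum_mul]
  simp only [pow_add, mul_assoc]
end
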